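/- Let f be an m-variate real polynomial of individual degree less than d with all coefficients in [-1,1], and suppose rationals g_e/2^{k₁} approximate the coefficients with error < 2^{-k₁} and points â/2^{k₂} (coordinatewise, with â ∈ ℤ^m, |âᵢ| ≤ 2^{k₂}) approximate a ∈ (-1,1)^m with coordinatewise error < 2^{-k₂}, where k₁ ≥ t + m·log₂ d + 2 and k₂ ≥ t + m·log₂ d + log₂(4md) + 2 and 2^{k₂} > 4d²m². Then |f(a) − (1/2^{k₁})·Σ_e g_e·(â/2^{k₂})^e| ≤ 1/2^{t+1}. -/
import Mathlib


open MvPolynomial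

private lemma abs_prod_sub_prod_le' {ι : Type*} [DecidableEq ι] (s : Finset ι) (x y : ι → ℝ)
    (hx : ∀ i, |x i| ≤ 1) (hy : ∀ i, |y i| ≤ 1) :
    |∏ i ∈ s, x i - ∏ i ∈ s, y i| ≤ ∑ i ∈ s, |x i - y i| := by
  induction s using Finset.induction_on with
  | empty => simp
  | @insert j s hj ih =>
    rw [Finset.prod_insert hj, Finset.prod_insert hj, Finset.sum_insert hj]
    have h1 : |∏ i ∈ s, y i| ≤ 1 := by
      rw [Finset.abs_prod]
      exact Finset.prod_le_one (fun i _ => abs_nonneg _) (fun i _ => hy i)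
    have h2 : |x j * ∏ i ∈ s, x i - y j * ∏ i ∈ s, y i|
        ≤ |x j| * |∏ i ∈ s, x i - ∏ i ∈ s, y i| + |x j - y j| * |∏ i ∈ s, y i| := by
      calc |x j * ∏ i ∈ s, x i - y j * ∏ i ∈ s, y i|
          = |x j * (∏ i ∈ s, x i - ∏ i ∈ s, y i) + (x j - y j) * ∏ i ∈ s, y i| := by ring_nf
        _ ≤ |x j * (∏ i ∈ s, x i - ∏ i ∈ s, y i)| + |(x j - y j) * ∏ i ∈ s, y i| := abs_add_le _ _
        _ = |x j| * |∏ i ∈ s, x i - ∏ i ∈ s, y i| + |x j - y j| * |∏ i ∈ s, y i| := by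
            rw [abs_mul, abs_mul]
    have h3 : |x j| * |∏ i ∈ s, x i - ∏ i ∈ s, y i| ≤ 1 * (∑ i ∈ s, |x i - y i|) := by
      exact mul_le_mul (hx j) ih (abs_nonneg _) zero_le_one
    have h4 : |x j - y j| * |∏ i ∈ s, y i| ≤ |x j - y j| * 1 :=
      mul_le_mul_of_nonneg_left h1 (abs_nonneg _)
    linarith

private lemma abs_pow_sub_pow_le' (x y : ℝ) (hx : |x| ≤ 1) (hy : |y| ≤ 1) (n : ℕ) :
    |x ^ n - y ^ n| ≤ n * |x - y| := by
  have := abs_prod_sub_prod_le' (Finset.range n) (fun _ => x) (fun _ => y)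
    (fun _ => hx) (fun _ => hy)
  simpa using this

/-- Combined rounding error for approximate MME: let `f` be an `m`-variate real
polynomial of individual degree `< d` with coefficients in `[-1,1]`; round each
coefficient `f_e` to `g_e/2^{k₁}` with error `< 2^{-k₁}` and each coordinate of the point
`a ∈ (-1,1)^m` to `âᵢ/2^{k₂}` (`âᵢ ∈ ℤ`, `|âᵢ| ≤ 2^{k₂}`) with error `< 2^{-k₂}`.
If `k₁ ≥ t + m·log₂ d + 2`, `k₂ ≥ t + m·log₂ d + log₂(4md) + 2` and `2^{k₂} > 4d²m²`,
then the evaluation of the rounded polynomial at the rounded point is within `1/2^{t+1}`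
of `f(a)`. -/
theorem approx_mme_rounding_error (m d k₁ k₂ t : ℕ)
    (hm : 1 ≤ m) (hd : 2 ≤ d) (ht : 1 ≤ t)
    (hk₁ : (t : ℝ) + m * Real.logb 2 d + 2 ≤ k₁)
    (hk₂ : (t : ℝ) + m * Real.logb 2 d + Real.logb 2 (4 * m * d) + 2 ≤ k₂)
    (hk₂' : (4 : ℝ) * (d : ℝ) ^ 2 * (m : ℝ) ^ 2 < 2 ^ k₂)
    (f : MvPolynomial (Fin m) ℝ)
    (hdeg : ∀ e ∈ f.support, ∀ i, e i < d)
    (hcoeff : ∀ e, |coeff e f| ≤ 1)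
    (g : (Fin m →₀ ℕ) → ℤ)
    (hg : ∀ e, |coeff e f - (g e : ℝ) / 2 ^ k₁| < 1 / 2 ^ k₁)
    (a : Fin m → ℝ) (ha : ∀ i, |a i| < 1)
    (ahat : Fin m → ℤ) (hahat : ∀ i, |ahat i| ≤ 2 ^ k₂)
    (haclose : ∀ i, |a i - (ahat i : ℝ) / 2 ^ k₂| < 1 / 2 ^ k₂) :
    |eval a f -
        (1 / 2 ^ k₁) *
          ∑ e : Fin m → Fin d,
            (g (Finsupp.equivFunOnFinite.symm fun i => ((e i : ℕ))) : ℝ) *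
              ∏ i, ((ahat i : ℝ) / 2 ^ k₂) ^ ((e i : ℕ))| ≤
      1 / 2 ^ (t + 1) := by
  classical
  set b : Fin m → ℝ := fun i => (ahat i : ℝ) / 2 ^ k₂ with hbdef
  set E : (Fin m → Fin d) → (Fin m →₀ ℕ) :=
    fun e => Finsupp.equivFunOnFinite.symm fun i => ((e i : ℕ)) with hEdef
  have hEapp : ∀ (e : Fin m → Fin d) (i : Fin m), (E e) i = (e i : ℕ) := by
    intro e i; simp [hEdef]
  have hb : ∀ i, |b i| ≤ 1 := by
    intro i
    rw [hbdef]
    rw [abs_div, abs_of_pos (by positivity : (0:ℝ) < 2 ^ k₂)]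
    rw [div_le_one (by positivity)]
    have := hahat i
    calc |((ahat i : ℝ))| = ((|ahat i| : ℤ) : ℝ) := by push_cast; rfl
      _ ≤ ((2 ^ k₂ : ℤ) : ℝ) := by exact_mod_cast this
      _ = 2 ^ k₂ := by push_cast; ring
  have hab : ∀ i, |a i - b i| ≤ 1 / 2 ^ k₂ := fun i => (haclose i).le
  -- evaluation as a sum over the grid
  have key : ∀ x : Fin m → ℝ,
      eval x f = ∑ e : Fin m → Fin d, coeff (E e) f * ∏ i, x i ^ ((e i : ℕ)) := by
    intro x
    rw [eval_eq']
    symm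
    rw [← Finset.sum_filter_of_ne
      (p := fun e : Fin m → Fin d => E e ∈ f.support)
      (fun e _ hne => by
        by_contra hmem
        exact hne (by rw [MvPolynomial.notMem_support_iff.mp hmem, zero_mul]))]
    refine Finset.sum_bij' (fun e _ => E e)
      (fun s hs => fun i => (⟨s i, hdeg s hs i⟩ : Fin d)) ?_ ?_ ?_ ?_ ?_
    · intro e he
      exact (Finset.mem_filter.mp he).2
    · intro s hs
      refine Finset.mem_filter.mpr ⟨Finset.mem_univ _, ?_⟩
      have : E (fun i => (⟨s i, hdeg s hs i⟩ : Fin d)) = s := by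
        ext i; simp [hEapp]
      rwa [this]
    · intro e he
      funext i
      refine Fin.val_injective ?_
      simp [hEapp]
    · intro s hs
      ext i; simp [hEapp]
    · intro e he
      rfl
  -- rewrite the rounded sum
  have hsum : (1 / 2 ^ k₁ : ℝ) *
      ∑ e : Fin m → Fin d, (g (E e) : ℝ) * ∏ i, b i ^ ((e i : ℕ))
      = ∑ e : Fin m → Fin d, ((g (E e) : ℝ) / 2 ^ k₁) * ∏ i, b i ^ ((e i : ℕ)) := by
    rw [Finset.mul_sum]
    exact Finset.sum_congr rfl fun e _ => by ring
  rw [show (∑ e : Fin m → Fin d,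
        (g (Finsupp.equivFunOnFinite.symm fun i => ((e i : ℕ))) : ℝ) *
          ∏ i, ((ahat i : ℝ) / 2 ^ k₂) ^ ((e i : ℕ)))
      = ∑ e : Fin m → Fin d, (g (E e) : ℝ) * ∏ i, b i ^ ((e i : ℕ)) from rfl, hsum,
    key a, ← Finset.sum_sub_distrib]
  -- per-term bound
  have hterm : ∀ e : Fin m → Fin d,
      |coeff (E e) f * ∏ i, a i ^ ((e i : ℕ)) -
        ((g (E e) : ℝ) / 2 ^ k₁) * ∏ i, b i ^ ((e i : ℕ))|
      ≤ (m : ℝ) * d / 2 ^ k₂ + 1 / 2 ^ k₁ := by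
    intro e
    set Pa := ∏ i, a i ^ ((e i : ℕ)) with hPa
    set Pb := ∏ i, b i ^ ((e i : ℕ)) with hPb
    have hPb1 : |Pb| ≤ 1 := by
      rw [hPb, Finset.abs_prod]
      exact Finset.prod_le_one (fun i _ => abs_nonneg _)
        (fun i _ => by rw [abs_pow]; exact pow_le_one₀ (abs_nonneg _) (hb i))
    have hPab : |Pa - Pb| ≤ (m : ℝ) * d / 2 ^ k₂ := by
      have h1 := abs_prod_sub_prod_le' Finset.univ
        (fun i => a i ^ ((e i : ℕ))) (fun i => b i ^ ((e i : ℕ)))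
        (fun i => by rw [abs_pow]; exact pow_le_one₀ (abs_nonneg _) (ha i).le)
        (fun i => by rw [abs_pow]; exact pow_le_one₀ (abs_nonneg _) (hb i))
      refine h1.trans ?_
      have h2 : ∀ i : Fin m, |a i ^ ((e i : ℕ)) - b i ^ ((e i : ℕ))| ≤ (d : ℝ) / 2 ^ k₂ := by
        intro i
        refine (abs_pow_sub_pow_le' (a i) (b i) (ha i).le (hb i) _).trans ?_
        have h3 : ((e i : ℕ) : ℝ) ≤ (d : ℝ) := by
          exact_mod_cast (e i).2.le
        calc ((e i : ℕ) : ℝ) * |a i - b i| ≤ (d : ℝ) * (1 / 2 ^ k₂) := by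
              exact mul_le_mul h3 (hab i) (abs_nonneg _) (by positivity)
          _ = (d : ℝ) / 2 ^ k₂ := by ring
      calc (∑ i : Fin m, |a i ^ ((e i : ℕ)) - b i ^ ((e i : ℕ))|)
          ≤ ∑ _i : Fin m, (d : ℝ) / 2 ^ k₂ := Finset.sum_le_sum fun i _ => h2 i
        _ = (m : ℝ) * ((d : ℝ) / 2 ^ k₂) := by
            rw [Finset.sum_const, Finset.card_univ, Fintype.card_fin, nsmul_eq_mul]
        _ = (m : ℝ) * d / 2 ^ k₂ := by ring
    calc |coeff (E e) f * Pa - ((g (E e) : ℝ) / 2 ^ k₁) * Pb|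
        = |coeff (E e) f * (Pa - Pb) + (coeff (E e) f - (g (E e) : ℝ) / 2 ^ k₁) * Pb| := by
          ring_nf
      _ ≤ |coeff (E e) f * (Pa - Pb)| + |(coeff (E e) f - (g (E e) : ℝ) / 2 ^ k₁) * Pb| :=
          abs_add_le _ _
      _ = |coeff (E e) f| * |Pa - Pb| + |coeff (E e) f - (g (E e) : ℝ) / 2 ^ k₁| * |Pb| := by
          rw [abs_mul, abs_mul]
      _ ≤ 1 * ((m : ℝ) * d / 2 ^ k₂) + (1 / 2 ^ k₁) * 1 := by
          refine add_le_add (mul_le_mul (hcoeff _) hPab (abs_nonneg _) zero_le_one)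
            (mul_le_mul (hg (E e)).le hPb1 (abs_nonneg _) (by positivity))
      _ = (m : ℝ) * d / 2 ^ k₂ + 1 / 2 ^ k₁ := by ring
  have hcard : (Finset.univ : Finset (Fin m → Fin d)).card = d ^ m := by
    rw [Finset.card_univ, Fintype.card_fun, Fintype.card_fin, Fintype.card_fin]
  -- sum the per-term bounds
  have hmain : |∑ e : Fin m → Fin d,
      (coeff (E e) f * ∏ i, a i ^ ((e i : ℕ)) -
        ((g (E e) : ℝ) / 2 ^ k₁) * ∏ i, b i ^ ((e i : ℕ)))|
      ≤ (d : ℝ) ^ m * ((m : ℝ) * d / 2 ^ k₂ + 1 / 2 ^ k₁) := by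
    refine (Finset.abs_sum_le_sum_abs _ _).trans ?_
    calc (∑ e : Fin m → Fin d, |coeff (E e) f * ∏ i, a i ^ ((e i : ℕ)) -
          ((g (E e) : ℝ) / 2 ^ k₁) * ∏ i, b i ^ ((e i : ℕ))|)
        ≤ ∑ _e : Fin m → Fin d, ((m : ℝ) * d / 2 ^ k₂ + 1 / 2 ^ k₁) :=
          Finset.sum_le_sum fun e _ => hterm e
      _ = (d : ℝ) ^ m * ((m : ℝ) * d / 2 ^ k₂ + 1 / 2 ^ k₁) := by
          rw [Finset.sum_const, hcard, nsmul_eq_mul]; push_cast; ring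
  refine hmain.trans ?_
  -- numeric bounds
  have hd0 : (0:ℝ) < d := by positivity
  have hm0 : (0:ℝ) < m := by exact_mod_cast hm
  have hdm : ((d : ℝ) ^ m : ℝ) = (2 : ℝ) ^ ((m : ℝ) * Real.logb 2 d) := by
    rw [mul_comm ((m:ℝ)) (Real.logb 2 d), Real.rpow_mul (by norm_num : (0:ℝ) ≤ 2),
      Real.rpow_logb (by norm_num) (by norm_num) hd0, Real.rpow_natCast]
  have h2k : ∀ n : ℕ, ((2:ℝ) ^ n) = (2:ℝ) ^ (n : ℝ) := fun n => (Real.rpow_natCast 2 n).symm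
  have hk1' : (d : ℝ) ^ m * 2 ^ (t + 2) ≤ (2:ℝ) ^ k₁ := by
    rw [h2k k₁]
    calc (d : ℝ) ^ m * 2 ^ (t + 2)
        = (2:ℝ) ^ ((t : ℝ) + (m : ℝ) * Real.logb 2 d + 2) := by
          rw [hdm, ← Real.rpow_natCast 2 (t + 2)]
          rw [← Real.rpow_add (by norm_num)]
          congr 1
          push_cast; ring
      _ ≤ (2:ℝ) ^ (k₁ : ℝ) := Real.rpow_le_rpow_of_exponent_le (by norm_num) hk₁
  have hk2' : (d : ℝ) ^ m * (4 * m * d) * 2 ^ (t + 2) ≤ (2:ℝ) ^ k₂ := by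
    rw [h2k k₂]
    calc (d : ℝ) ^ m * (4 * m * d) * 2 ^ (t + 2)
        = (2:ℝ) ^ ((t : ℝ) + (m : ℝ) * Real.logb 2 d + Real.logb 2 (4 * m * d) + 2) := by
          rw [hdm, ← Real.rpow_natCast 2 (t + 2)]
          rw [show ((t : ℝ) + (m : ℝ) * Real.logb 2 d + Real.logb 2 (4 * m * d) + 2)
              = ((m : ℝ) * Real.logb 2 d) + (Real.logb 2 (4 * m * d)) + (((t + 2 : ℕ) : ℝ)) by
                push_cast; ring]
          rw [Real.rpow_add (by norm_num), Real.rpow_add (by norm_num),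
            Real.rpow_logb (by norm_num) (by norm_num) (by positivity)]
      _ ≤ (2:ℝ) ^ (k₂ : ℝ) := Real.rpow_le_rpow_of_exponent_le (by norm_num) hk₂
  -- final arithmetic
  have hp1 : (0:ℝ) < 2 ^ k₁ := by positivity
  have hp2 : (0:ℝ) < 2 ^ k₂ := by positivity
  have hpt : (0:ℝ) < 2 ^ (t + 2) := by positivity
  have hdmp : (0:ℝ) < (d:ℝ) ^ m := by positivity
  have e1 : (d : ℝ) ^ m * (1 / 2 ^ k₁) ≤ 1 / 2 ^ (t + 2) := by
    rw [mul_one_div, div_le_div_iff₀ hp1 hpt]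
    linarith [hk1']
  have e2 : (d : ℝ) ^ m * ((m : ℝ) * d / 2 ^ k₂) ≤ 1 / 2 ^ (t + 2) := by
    rw [show (d : ℝ) ^ m * ((m : ℝ) * d / 2 ^ k₂) = ((d : ℝ) ^ m * ((m:ℝ) * d)) / 2 ^ k₂ by ring,
      div_le_div_iff₀ hp2 hpt]
    have h4 : (d : ℝ) ^ m * ((m:ℝ) * d) * 2 ^ (t + 2)
        ≤ (d : ℝ) ^ m * (4 * m * d) * 2 ^ (t + 2) := by
      have : (d : ℝ) ^ m * ((m:ℝ) * d) ≤ (d : ℝ) ^ m * (4 * m * d) := by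
        refine mul_le_mul_of_nonneg_left ?_ (le_of_lt hdmp)
        nlinarith
      exact mul_le_mul_of_nonneg_right this (le_of_lt hpt)
    linarith [hk2']
  have hfinal : (d : ℝ) ^ m * ((m : ℝ) * d / 2 ^ k₂ + 1 / 2 ^ k₁)
      = (d : ℝ) ^ m * ((m : ℝ) * d / 2 ^ k₂) + (d : ℝ) ^ m * (1 / 2 ^ k₁) := by ring
  rw [hfinal]
  have : (1:ℝ) / 2 ^ (t + 2) + 1 / 2 ^ (t + 2) = 1 / 2 ^ (t + 1) := by
    have h5 : (2:ℝ) ^ (t + 2) = 2 ^ (t + 1) * 2 := by rw [pow_succ]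
    rw [h5]
    field_simp
    ring
  linarith [e1, e2]
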